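/- arXiv:1902.10820 — 3 statements merged into one kernel-verified Lean document; each statement's English description precedes it below -/
import Mathlib

section
/- For all natural numbers m and n, there is a bijection between the set of functions f : Fin n → Fin m ⊕ Fin 2 that are injective on the left part and the set of dimension-preserving graph morphisms from the standard m-cube to the standard n-cube. -/
/-- A function into a sum type is injective on the left part. -/
def LInj {α β γ : Type*} (f : α → β ⊕ γ) : Prop :=
  ∀ a₁ a₂ b, f a₁ = Sum.inl b → f a₂ = Sum.inl b → a₁ = a₂

/-- Edge relation of the standard n-cube. -/
def CubeE (n : ℕ) (x y : Fin n → Bool) : Prop :=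
  x = y ∨ ∃ i : Fin n, x i = false ∧ y i = true ∧ ∀ j, j ≠ i → x j = y j

/-- Graph morphisms between directed graphs given by edge relations. -/
def IsGraphHom {V V' : Type*} (E : V → V → Prop) (E' : V' → V' → Prop) (g : V → V') : Prop :=
  ∀ x y, E x y → E' (g x) (g y)

/-- The pair (x, y) is a non-loop edge flipping exactly coordinate i. -/
def Flips {n : ℕ} (x y : Fin n → Bool) (i : Fin n) : Prop :=
  x i ≠ y i ∧ ∀ j, j ≠ i → x j = y j

/-- A map between cube vertex sets is dimension-preserving. -/
def DimPres {m n : ℕ} (g : (Fin m → Bool) → (Fin n → Bool)) : Prop :=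
  ∀ x₁ y₁ x₂ y₂ (i : Fin m), Flips x₁ y₁ i → Flips x₂ y₂ i →
    (g x₁ = g y₁ ∧ g x₂ = g y₂) ∨
    ∃ j : Fin n, Flips (g x₁) (g y₁) j ∧ Flips (g x₂) (g y₂) j

/-!
A labelling `f : Fin n → Fin m ⊕ Fin 2` gives the cube map whose `j`-th output coordinate copies
input coordinate `i` when `f j = inl i` and is the constant `c` when `f j = inr c`; injectivity
on the left part makes it dimension-preserving. Conversely, dimension preservation forces each
input direction `i` either to be collapsed everywhere or to flip one and the same output
coordinate `j` on every `i`-edge; being a graph morphism then gives `g x j = x i`. An output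
coordinate flipped by no direction is invariant along every edge, hence constant.
-/

open Function

variable {m n : ℕ}

section Cube

lemma Flips.unique {a b : Fin n → Bool} {j j' : Fin n} (h : Flips a b j) (h' : Flips a b j') :
    j = j' := by
  by_contra hne
  exact h'.1 (h.2 j' (Ne.symm hne))

lemma Flips.eq_false_and_eq_true {a b : Fin n → Bool} {j : Fin n} (hf : Flips a b j)
    (he : CubeE n a b) : a j = false ∧ b j = true := by
  rcases he with rfl | ⟨i, hai, hbi, hoff⟩
  · exact absurd rfl hf.1
  · obtain rfl : i = j := by
      by_contra hne
      exact Bool.false_ne_true (hai ▸ hbi ▸ hf.2 i hne)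
    exact ⟨hai, hbi⟩

lemma cubeE_of_flips {a b : Fin n → Bool} {j : Fin n} (hf : Flips a b j) (ha : a j = false) :
    CubeE n a b :=
  Or.inr ⟨j, ha, Bool.eq_true_of_not_eq_false (ha ▸ hf.1).symm, hf.2⟩

lemma flips_update (x : Fin m → Bool) (i : Fin m) :
    Flips (update x i false) (update x i true) i :=
  ⟨by simp, fun j hj => by simp [update_of_ne hj]⟩

lemma cubeE_update (x : Fin m → Bool) (i : Fin m) :
    CubeE m (update x i false) (update x i true) :=
  cubeE_of_flips (flips_update x i) (by simp)

end Cube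

lemma apply_eq_apply_false_of_update_invariant {ι β : Type*} [Fintype ι] [DecidableEq ι]
    {φ : (ι → Bool) → β} (h : ∀ x i, φ (update x i false) = φ (update x i true))
    (x : ι → Bool) : φ x = φ fun _ => false := by
  have key : ∀ s : Finset ι, φ (fun i => decide (i ∈ s)) = φ fun _ => false := by
    intro s
    induction s using Finset.induction_on with
    | empty => simp
    | insert a s ha ih =>
      have h_ins :
          (fun i => decide (i ∈ insert a s)) = update (fun i => decide (i ∈ s)) a true := by
        ext i; by_cases hi : i = a <;> simp [hi]
      have h_old : (fun i => decide (i ∈ s)) = update (fun i => decide (i ∈ s)) a false := by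
        ext i; by_cases hi : i = a <;> simp [hi, ha]
      rw [h_ins, ← h, ← h_old, ih]
  simpa using key (Finset.univ.filter fun i => x i)

section OfLabel

def evalLabel (s : Fin m ⊕ Fin 2) (x : Fin m → Bool) : Bool :=
  Sum.elim x (fun c => decide (c = 1)) s

@[simp] lemma evalLabel_inl (i : Fin m) (x : Fin m → Bool) : evalLabel (Sum.inl i) x = x i := rfl

@[simp] lemma evalLabel_inr (c : Fin 2) (x : Fin m → Bool) :
    evalLabel (Sum.inr c) x = decide (c = 1) := rfl

lemma evalLabel_injective : Injective (evalLabel (m := m)) := by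
  have inl_ne_inr (i : Fin m) (c : Fin 2) : evalLabel (Sum.inl i) ≠ evalLabel (Sum.inr c) := by
    intro h
    have h₀ := congrFun h fun _ => false
    have h₁ := congrFun h fun _ => true
    simp only [evalLabel_inl, evalLabel_inr] at h₀ h₁
    exact Bool.false_ne_true (h₀.trans h₁.symm)
  rintro (i | c) (i' | c') h
  · simpa [eq_comm] using congrFun h fun k => decide (k = i)
  · exact absurd h (inl_ne_inr i c')
  · exact absurd h.symm (inl_ne_inr i' c)
  · have h₀ := congrFun h fun _ => false
    fin_cases c <;> fin_cases c' <;> simp_all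

def cubeMapOfLabel (f : Fin n → Fin m ⊕ Fin 2) (x : Fin m → Bool) : Fin n → Bool :=
  fun j => evalLabel (f j) x

lemma cubeMapOfLabel_injective : Injective (cubeMapOfLabel (m := m) (n := n)) := by
  intro f f' h
  funext j
  exact evalLabel_injective (funext fun x => congrFun (congrFun h x) j)

variable {f : Fin n → Fin m ⊕ Fin 2} {x y : Fin m → Bool} {i : Fin m}

lemma cubeMapOfLabel_apply_eq_of_flips (h : Flips x y i) {j : Fin n} (hj : f j ≠ Sum.inl i) :
    cubeMapOfLabel f x j = cubeMapOfLabel f y j := by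
  unfold cubeMapOfLabel
  rcases hfj : f j with i' | c
  · exact h.2 i' fun hi => hj (hi ▸ hfj)
  · rfl

lemma flips_cubeMapOfLabel (hf : LInj f) (h : Flips x y i) {j : Fin n} (hj : f j = Sum.inl i) :
    Flips (cubeMapOfLabel f x) (cubeMapOfLabel f y) j := by
  refine ⟨by simpa [cubeMapOfLabel, hj] using h.1, fun j' hj' => ?_⟩
  exact cubeMapOfLabel_apply_eq_of_flips h fun hi => hj' (hf j' j i hi hj)

lemma cubeMapOfLabel_eq_of_flips (hi : ∀ j, f j ≠ Sum.inl i) (h : Flips x y i) :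
    cubeMapOfLabel f x = cubeMapOfLabel f y :=
  funext fun j => cubeMapOfLabel_apply_eq_of_flips h (hi j)

lemma isGraphHom_cubeMapOfLabel (hf : LInj f) :
    IsGraphHom (CubeE m) (CubeE n) (cubeMapOfLabel f) := by
  rintro x y (rfl | ⟨i, hx, hy, hoff⟩)
  · exact Or.inl rfl
  have hxy : Flips x y i := ⟨by simp [hx, hy], hoff⟩
  by_cases hi : ∃ j, f j = Sum.inl i
  · obtain ⟨j, hj⟩ := hi
    exact cubeE_of_flips (flips_cubeMapOfLabel hf hxy hj) (by simp [cubeMapOfLabel, hj, hx])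
  · push Not at hi
    exact Or.inl (cubeMapOfLabel_eq_of_flips hi hxy)

lemma dimPres_cubeMapOfLabel (hf : LInj f) : DimPres (cubeMapOfLabel f) := by
  intro x₁ y₁ x₂ y₂ i h₁ h₂
  by_cases hi : ∃ j, f j = Sum.inl i
  · obtain ⟨j, hj⟩ := hi
    exact Or.inr ⟨j, flips_cubeMapOfLabel hf h₁ hj, flips_cubeMapOfLabel hf h₂ hj⟩
  · push Not at hi
    exact Or.inl ⟨cubeMapOfLabel_eq_of_flips hi h₁, cubeMapOfLabel_eq_of_flips hi h₂⟩

end OfLabel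

section ToLabel

variable {g : (Fin m → Bool) → (Fin n → Bool)} {i : Fin m} {j : Fin n}

def FlipsTo (g : (Fin m → Bool) → (Fin n → Bool)) (i : Fin m) (j : Fin n) : Prop :=
  ∀ x, Flips (g (update x i false)) (g (update x i true)) j

lemma FlipsTo.unique {j' : Fin n} (h : FlipsTo g i j) (h' : FlipsTo g i j') : j = j' :=
  (h fun _ => false).unique (h' fun _ => false)

lemma FlipsTo.apply_eq (hg : IsGraphHom (CubeE m) (CubeE n) g) (h : FlipsTo g i j)
    (x : Fin m → Bool) : g x j = x i := by
  obtain ⟨h_false, h_true⟩ := (h x).eq_false_and_eq_true (hg _ _ (cubeE_update x i))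
  have hx : update x i (x i) = x := update_eq_self i x
  cases hxi : x i <;> rw [hxi] at hx <;> simp only [hx] at h_false h_true <;> assumption

/-- Comparing an arbitrary `i`-edge with the `i`-edge at the origin. -/
lemma DimPres.collapse_or_flipsTo (hg : DimPres g) (i : Fin m) :
    (∀ x, g (update x i false) = g (update x i true)) ∨ ∃ j, FlipsTo g i j := by
  have edge x := hg _ _ _ _ i (flips_update (fun _ => false) i) (flips_update x i)
  rcases edge fun _ => false with ⟨h₀, -⟩ | ⟨j, hj, -⟩
  · refine Or.inl fun x => ?_
    rcases edge x with ⟨-, hx⟩ | ⟨j, hj, -⟩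
    · exact hx
    · exact absurd (congrFun h₀ j) hj.1
  · refine Or.inr ⟨j, fun x => ?_⟩
    rcases edge x with ⟨h₀, -⟩ | ⟨j', hj', hx⟩
    · exact absurd (congrFun h₀ j) hj.1
    · rwa [hj'.unique hj] at hx

lemma DimPres.apply_eq_of_not_flipsTo (hg : DimPres g) (hj : ∀ i, ¬ FlipsTo g i j)
    (x : Fin m → Bool) : g x j = g (fun _ => false) j := by
  refine apply_eq_apply_false_of_update_invariant (φ := fun x => g x j) (fun x i => ?_) x
  rcases hg.collapse_or_flipsTo i with hc | ⟨j', hj'⟩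
  · exact congrFun (hc x) j
  · exact (hj' x).2 j fun h => hj i (h ▸ hj')

open Classical in
noncomputable def labelOfCubeMap (g : (Fin m → Bool) → (Fin n → Bool)) (j : Fin n) :
    Fin m ⊕ Fin 2 :=
  if h : ∃ i, FlipsTo g i j then Sum.inl h.choose
  else Sum.inr (if g (fun _ => false) j then 1 else 0)

lemma flipsTo_of_labelOfCubeMap_eq_inl (h : labelOfCubeMap g j = Sum.inl i) : FlipsTo g i j := by
  unfold labelOfCubeMap at h
  split_ifs at h with hex
  obtain rfl := Sum.inl.inj h
  exact hex.choose_spec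

lemma lInj_labelOfCubeMap (g : (Fin m → Bool) → (Fin n → Bool)) : LInj (labelOfCubeMap g) :=
  fun _ _ _ h₁ h₂ =>
    (flipsTo_of_labelOfCubeMap_eq_inl h₁).unique (flipsTo_of_labelOfCubeMap_eq_inl h₂)

lemma cubeMapOfLabel_labelOfCubeMap (hHom : IsGraphHom (CubeE m) (CubeE n) g) (hDP : DimPres g) :
    cubeMapOfLabel (labelOfCubeMap g) = g := by
  funext x j
  by_cases h : ∃ i, FlipsTo g i j
  · rw [cubeMapOfLabel, labelOfCubeMap, dif_pos h, evalLabel_inl, h.choose_spec.apply_eq hHom]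
  · rw [cubeMapOfLabel, labelOfCubeMap, dif_neg h,
      hDP.apply_eq_of_not_flipsTo (not_exists.mp h) x]
    cases g (fun _ => false) j <;> simp

end ToLabel

theorem stmt4 (m n : ℕ) :
    Nonempty ({f : Fin n → Fin m ⊕ Fin 2 // LInj f} ≃
      {g : (Fin m → Bool) → (Fin n → Bool) //
        IsGraphHom (CubeE m) (CubeE n) g ∧ DimPres g}) := by
  refine ⟨Equiv.ofBijective
    (fun f => ⟨cubeMapOfLabel f.1, isGraphHom_cubeMapOfLabel f.2, dimPres_cubeMapOfLabel f.2⟩)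
    ⟨fun f f' h => Subtype.ext (cubeMapOfLabel_injective (congrArg Subtype.val h)), ?_⟩⟩
  rintro ⟨g, hHom, hDP⟩
  exact ⟨⟨labelOfCubeMap g, lInj_labelOfCubeMap g⟩,
    Subtype.ext (cubeMapOfLabel_labelOfCubeMap hHom hDP)⟩
end

section
/- Let m ≥ n be natural numbers. The map g : (Fin m → Bool) → (Fin n → Bool) defined by restricting to the first n coordinates, g x = x ∘ Fin.castLE h (where h : n ≤ m), is a surjective dimension-preserving graph morphism from the twisted m-cube to the twisted n-cube, and it is the unique one: every surjective dimension-preserving graph morphism from the twisted m-cube to the twisted n-cube equals g. -/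
/-- Edge relation of the twisted n-cube. -/
def TwE (n : ℕ) (x y : Fin n → Bool) : Prop :=
  x = y ∨ ∃ i : Fin n, (∀ j, j ≠ i → x j = y j) ∧ y i = !(x i) ∧
    (x i = true ↔ Odd (Finset.univ.filter (fun j : Fin n => j < i ∧ x j = false)).card)

/-!
Call the edge of direction `i` at `x` *outgoing* (`EdgeOut i x`) when `x → flipAt i x` is an
edge of the twisted cube; exactly one of `x` and `flipAt i x` has this property, and flipping a
coordinate `c` reverses the orientation of direction `a` exactly when `c ≤ a`.

A dimension-preserving morphism `g` either collapses every edge of direction `i`, or satisfies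
`g ∘ flipAt i = flipAt j ∘ g` for a single `j`, and then it preserves outgoingness:
`EdgeOut i x ↔ EdgeOut j (g x)`. Comparing orientations at `x` and `flipAt c x` shows that the
non-collapsed directions map to their images in an order-preserving way, that every direction
below a non-collapsed one is non-collapsed, and (by surjectivity) that every target direction is
hit. Counting then forces direction `j` to come from direction `j` itself. Finally a vertex is
determined by which of its edges are outgoing, and the restriction map satisfies the same
relations, so `g` is the restriction.
-/

open Function Finset

section Flip

variable {k : ℕ}

def flipAt (i : Fin k) (x : Fin k → Bool) : Fin k → Bool := update x i (!x i)

def falsesBelow (i : Fin k) (x : Fin k → Bool) : ℕ :=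
  (univ.filter (fun j : Fin k => j < i ∧ x j = false)).card

def EdgeOut (i : Fin k) (x : Fin k → Bool) : Prop :=
  x i = true ↔ Odd (falsesBelow i x)

@[simp]
lemma flipAt_apply_self (i : Fin k) (x : Fin k → Bool) : flipAt i x i = !x i :=
  update_self i _ x

lemma flipAt_apply_of_ne {i j : Fin k} (x : Fin k → Bool) (h : j ≠ i) : flipAt i x j = x j :=
  update_of_ne h _ x

@[simp]
lemma flipAt_flipAt (i : Fin k) (x : Fin k → Bool) : flipAt i (flipAt i x) = x := by
  simp [flipAt]

lemma eq_flipAt_iff {i : Fin k} {x y : Fin k → Bool} :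
    y = flipAt i x ↔ y i = !x i ∧ ∀ j, j ≠ i → x j = y j := by
  simp only [flipAt, eq_update_iff, @eq_comm _ (x _)]

lemma flipAt_left_injective (x : Fin k → Bool) : Injective fun i => flipAt i x := by
  intro i j hij
  by_contra hne
  have := congrFun hij i
  simp only [flipAt_apply_self, flipAt_apply_of_ne x hne] at this
  exact Bool.not_ne_self _ this

lemma flips_iff {i : Fin k} {x y : Fin k → Bool} : Flips x y i ↔ y = flipAt i x := by
  rw [eq_flipAt_iff, Flips]
  cases x i <;> cases y i <;> simp

lemma Flips.unique_s9 {i j : Fin k} {x y : Fin k → Bool} (hi : Flips x y i) (hj : Flips x y j) :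
    i = j :=
  flipAt_left_injective x ((flips_iff.1 hi).symm.trans (flips_iff.1 hj))

lemma flips_flipAt (i : Fin k) (x : Fin k → Bool) : Flips x (flipAt i x) i :=
  flips_iff.2 rfl

lemma twE_iff {x y : Fin k → Bool} :
    TwE k x y ↔ x = y ∨ ∃ i, y = flipAt i x ∧ EdgeOut i x := by
  simp only [TwE, eq_flipAt_iff, EdgeOut, falsesBelow, and_assoc, and_comm (a := ∀ _, _ → _)]

lemma twE_flipAt_iff {i : Fin k} {x : Fin k → Bool} : TwE k x (flipAt i x) ↔ EdgeOut i x := by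
  rw [twE_iff]
  constructor
  · rintro (h | ⟨j, hj, hout⟩)
    · exact absurd (congrFun h i) (by simp)
    · rwa [flipAt_left_injective x hj]
  · exact fun h => Or.inr ⟨i, rfl, h⟩

lemma falsesBelow_flipAt_of_le {a c : Fin k} (x : Fin k → Bool) (h : a ≤ c) :
    falsesBelow a (flipAt c x) = falsesBelow a x := by
  refine congrArg card (filter_congr fun j _ => and_congr_right fun hj => ?_)
  rw [flipAt_apply_of_ne x (hj.trans_le h).ne]

lemma falsesBelow_flipAt_add_one {a c : Fin k} {x : Fin k → Bool} (h : c < a)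
    (hx : x c = false) : falsesBelow a (flipAt c x) + 1 = falsesBelow a x := by
  have : univ.filter (fun j => j < a ∧ flipAt c x j = false) =
      (univ.filter (fun j => j < a ∧ x j = false)).erase c := by
    ext j
    by_cases hj : j = c
    · subst hj; simp [hx]
    · simp [hj, flipAt_apply_of_ne x hj]
  rw [falsesBelow, this, card_erase_add_one (by simp [h, hx]), falsesBelow]

lemma odd_falsesBelow_flipAt_iff {a c : Fin k} (x : Fin k → Bool) (h : c < a) :
    Odd (falsesBelow a (flipAt c x)) ↔ ¬Odd (falsesBelow a x) := by
  cases hx : x c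
  · rw [← falsesBelow_flipAt_add_one h hx, Nat.odd_add_one, not_not]
  · have hy : flipAt c x c = false := by simp [hx]
    rw [← falsesBelow_flipAt_add_one h hy, flipAt_flipAt, Nat.odd_add_one]

lemma edgeOut_flipAt_iff {a c : Fin k} (x : Fin k → Bool) :
    EdgeOut a (flipAt c x) ↔ (EdgeOut a x ↔ a < c) := by
  rcases lt_trichotomy a c with hac | rfl | hca
  · rw [EdgeOut, EdgeOut, flipAt_apply_of_ne x hac.ne, falsesBelow_flipAt_of_le x hac.le]
    simp [hac]
  · rw [EdgeOut, EdgeOut, flipAt_apply_self, falsesBelow_flipAt_of_le x le_rfl]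
    cases x a <;> simp
  · rw [EdgeOut, EdgeOut, flipAt_apply_of_ne x hca.ne', odd_falsesBelow_flipAt_iff x hca]
    simp only [hca.not_gt, iff_false]
    tauto

lemma edgeOut_flipAt_self_iff {i : Fin k} {x : Fin k → Bool} :
    EdgeOut i (flipAt i x) ↔ ¬EdgeOut i x := by
  rw [edgeOut_flipAt_iff, iff_false_right (lt_irrefl i)]

lemma eq_of_forall_edgeOut_iff {y z : Fin k → Bool} (h : ∀ j, EdgeOut j y ↔ EdgeOut j z) :
    y = z := by
  funext j
  induction j using WellFoundedLT.induction with
  | _ j ih =>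
    have hcount : falsesBelow j y = falsesBelow j z :=
      congrArg card (filter_congr fun i _ => and_congr_right fun hi => by rw [ih i hi])
    have := h j
    rw [EdgeOut, EdgeOut, hcount] at this
    exact Bool.eq_iff_iff.2 (by tauto)

lemma eq_of_flipAt_invariant {α : Sort*} {f : (Fin k → Bool) → α}
    (hf : ∀ x i, f (flipAt i x) = f x) (x y : Fin k → Bool) : f x = f y := by
  have key : ∀ s : Finset (Fin k), f (fun i => decide (i ∉ s)) = f fun _ => true := by
    intro s
    induction s using Finset.induction_on with
    | empty => simp
    | insert a s ha ih =>
      rw [← ih, ← hf _ a]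
      congr 1
      funext i
      by_cases hi : i = a
      · subst hi; simp [ha]
      · simp [hi, flipAt_apply_of_ne _ hi]
  have hx : ∀ x : Fin k → Bool, x = fun i => decide (i ∉ univ.filter (x · = false)) := by
    intro x; funext i; cases hxi : x i <;> simp [hxi]
  rw [hx x, hx y, key, key]

end Flip

section Restriction

variable {m n : ℕ} (h : n ≤ m)

lemma falsesBelow_comp_castLE (j : Fin n) (x : Fin m → Bool) :
    falsesBelow j (x ∘ Fin.castLE h) = falsesBelow (Fin.castLE h j) x := by
  refine card_bij (fun i _ => Fin.castLE h i) (fun i hi => ?_)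
    (fun _ _ _ _ e => Fin.castLE_injective h e) (fun i hi => ?_)
  · simp only [mem_filter, mem_univ, true_and, comp_apply] at hi ⊢
    exact ⟨(Fin.castLE_lt_castLE_iff h).2 hi.1, hi.2⟩
  · simp only [mem_filter, mem_univ, true_and] at hi
    have hin : (i : ℕ) < n := lt_trans (Fin.lt_def.1 hi.1) j.isLt
    refine ⟨⟨i, hin⟩, ?_, rfl⟩
    simp only [mem_filter, mem_univ, true_and, comp_apply]
    exact ⟨Fin.lt_def.2 (Fin.lt_def.1 hi.1), hi.2⟩

lemma edgeOut_comp_castLE (j : Fin n) (x : Fin m → Bool) :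
    EdgeOut j (x ∘ Fin.castLE h) ↔ EdgeOut (Fin.castLE h j) x := by
  rw [EdgeOut, EdgeOut, falsesBelow_comp_castLE, comp_apply]

lemma flipAt_castLE_comp (j : Fin n) (x : Fin m → Bool) :
    flipAt (Fin.castLE h j) x ∘ Fin.castLE h = flipAt j (x ∘ Fin.castLE h) :=
  update_comp_eq_of_injective x (Fin.castLE_injective h) j _

lemma flipAt_comp_castLE_of_notMem {i : Fin m} (hi : i ∉ Set.range (Fin.castLE h))
    (x : Fin m → Bool) : flipAt i x ∘ Fin.castLE h = x ∘ Fin.castLE h :=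
  update_comp_eq_of_notMem_range x _ hi

lemma isGraphHom_comp_castLE : IsGraphHom (TwE m) (TwE n) (· ∘ Fin.castLE h) := by
  intro x y hxy
  rcases twE_iff.1 hxy with rfl | ⟨i, rfl, hout⟩
  · exact Or.inl rfl
  dsimp only
  by_cases hi : i ∈ Set.range (Fin.castLE h)
  · obtain ⟨j, rfl⟩ := hi
    rw [flipAt_castLE_comp, twE_flipAt_iff, edgeOut_comp_castLE]
    exact hout
  · rw [flipAt_comp_castLE_of_notMem h hi]
    exact Or.inl rfl

lemma dimPres_comp_castLE : DimPres (· ∘ Fin.castLE h : (Fin m → Bool) → Fin n → Bool) := by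
  intro x₁ y₁ x₂ y₂ i h₁ h₂
  rw [flips_iff] at h₁ h₂
  subst h₁ h₂
  by_cases hi : i ∈ Set.range (Fin.castLE h)
  · obtain ⟨j, rfl⟩ := hi
    simp only [flipAt_castLE_comp]
    exact Or.inr ⟨j, flips_flipAt _ _, flips_flipAt _ _⟩
  · exact Or.inl ⟨(flipAt_comp_castLE_of_notMem h hi x₁).symm,
      (flipAt_comp_castLE_of_notMem h hi x₂).symm⟩

end Restriction

section Morphism

variable {m n : ℕ} {g : (Fin m → Bool) → Fin n → Bool}

lemma forall_flipAt_eq_or_exists_semiconj (hd : DimPres g) (i : Fin m) :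
    (∀ x, g (flipAt i x) = g x) ∨ ∃ j, Semiconj g (flipAt i) (flipAt j) := by
  by_cases hcol : ∀ x, g (flipAt i x) = g x
  · exact Or.inl hcol
  push Not at hcol
  obtain ⟨x₀, hx₀⟩ := hcol
  have key : ∀ x, ∃ j, Flips (g x₀) (g (flipAt i x₀)) j ∧ Flips (g x) (g (flipAt i x)) j :=
    fun x => (hd _ _ _ _ i (flips_flipAt i x₀) (flips_flipAt i x)).resolve_left
      fun hc => hx₀ hc.1.symm
  obtain ⟨j, hj, -⟩ := key x₀
  refine Or.inr ⟨j, fun x => ?_⟩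
  obtain ⟨j', hj₀, hjx⟩ := key x
  rw [hj₀.unique_s9 hj, flips_iff] at hjx
  exact hjx

lemma eq_of_semiconj_flipAt_right {i : Fin m} {j j' : Fin n}
    (h₁ : Semiconj g (flipAt i) (flipAt j)) (h₂ : Semiconj g (flipAt i) (flipAt j')) : j = j' :=
  flipAt_left_injective (g default) ((h₁ default).symm.trans (h₂ default))

section Hom

variable (hg : IsGraphHom (TwE m) (TwE n) g)
include hg

lemma edgeOut_of_semiconj {i : Fin m} {j : Fin n} (hs : Semiconj g (flipAt i) (flipAt j))
    {x : Fin m → Bool} (hx : EdgeOut i x) : EdgeOut j (g x) := by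
  rw [← twE_flipAt_iff, ← hs x]
  exact hg _ _ (twE_flipAt_iff.2 hx)

lemma edgeOut_iff_of_semiconj {i : Fin m} {j : Fin n} (hs : Semiconj g (flipAt i) (flipAt j))
    (x : Fin m → Bool) : EdgeOut i x ↔ EdgeOut j (g x) := by
  refine ⟨edgeOut_of_semiconj hg hs, fun hgx => ?_⟩
  by_contra hx
  have := edgeOut_of_semiconj hg hs (edgeOut_flipAt_self_iff.2 hx)
  rw [hs x, edgeOut_flipAt_self_iff] at this
  exact this hgx

lemma le_iff_of_semiconj {a c : Fin m} {j j' : Fin n} (ha : Semiconj g (flipAt a) (flipAt j))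
    (hc : Semiconj g (flipAt c) (flipAt j')) : c ≤ a ↔ j' ≤ j := by
  have h₁ := edgeOut_iff_of_semiconj hg ha default
  have h₂ := edgeOut_iff_of_semiconj hg ha (flipAt c default)
  rw [hc, edgeOut_flipAt_iff, edgeOut_flipAt_iff] at h₂
  rw [← not_lt, ← not_lt]
  tauto

lemma lt_of_semiconj_of_forall_flipAt_eq {a c : Fin m} {j : Fin n}
    (ha : Semiconj g (flipAt a) (flipAt j)) (hc : ∀ x, g (flipAt c x) = g x) : a < c := by
  have h₁ := edgeOut_iff_of_semiconj hg ha default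
  have h₂ := edgeOut_iff_of_semiconj hg ha (flipAt c default)
  rw [hc, edgeOut_flipAt_iff] at h₂
  tauto

lemma eq_of_semiconj_flipAt_left {c₁ c₂ : Fin m} {j : Fin n}
    (h₁ : Semiconj g (flipAt c₁) (flipAt j)) (h₂ : Semiconj g (flipAt c₂) (flipAt j)) :
    c₁ = c₂ :=
  le_antisymm ((le_iff_of_semiconj hg h₂ h₁).2 le_rfl) ((le_iff_of_semiconj hg h₁ h₂).2 le_rfl)

end Hom

lemma exists_semiconj_flipAt (hd : DimPres g) (hs : Surjective g) (j : Fin n) :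
    ∃ i, Semiconj g (flipAt i) (flipAt j) := by
  by_contra hno
  push Not at hno
  have hinv : ∀ x i, g (flipAt i x) j = g x j := by
    intro x i
    rcases forall_flipAt_eq_or_exists_semiconj hd i with hcol | ⟨j', hj'⟩
    · rw [hcol x]
    · have hne : j ≠ j' := by rintro rfl; exact hno i hj'
      rw [hj' x, flipAt_apply_of_ne _ hne]
  obtain ⟨x, hx⟩ := hs (flipAt j (g default))
  have := eq_of_flipAt_invariant (f := fun x => g x j) hinv x default
  rw [hx, flipAt_apply_self] at this
  exact Bool.not_ne_self _ this

lemma semiconj_flipAt_castLE (h : n ≤ m) (hg : IsGraphHom (TwE m) (TwE n) g) (hd : DimPres g)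
    (hs : Surjective g) (j : Fin n) : Semiconj g (flipAt (Fin.castLE h j)) (flipAt j) := by
  choose σ hσ using exists_semiconj_flipAt hd hs
  have hinj : Injective σ := fun a b hab => eq_of_semiconj_flipAt_right (hσ a) (hab ▸ hσ b)
  have himage : Iic (σ j) = (Iic j).image σ := by
    ext c
    simp only [mem_Iic, mem_image]
    constructor
    · intro hc
      rcases forall_flipAt_eq_or_exists_semiconj hd c with hcol | ⟨j', hj'⟩
      · exact absurd (lt_of_semiconj_of_forall_flipAt_eq hg (hσ j) hcol) hc.not_gt
      · have hcσ := eq_of_semiconj_flipAt_left hg hj' (hσ j')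
        exact ⟨j', (le_iff_of_semiconj hg (hσ j) hj').1 hc, hcσ.symm⟩
    · rintro ⟨b, hb, rfl⟩
      exact (le_iff_of_semiconj hg (hσ j) (hσ b)).2 hb
  have hcard := congrArg card himage
  rw [card_image_of_injective _ hinj, Fin.card_Iic, Fin.card_Iic] at hcard
  have hσj : σ j = Fin.castLE h j := Fin.ext (by simpa using hcard)
  exact hσj ▸ hσ j

end Morphism

theorem stmt9 (m n : ℕ) (h : n ≤ m) :
    (IsGraphHom (TwE m) (TwE n) (fun x => x ∘ Fin.castLE h) ∧
      DimPres (fun x => x ∘ Fin.castLE h) ∧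
      Function.Surjective (fun x : Fin m → Bool => x ∘ Fin.castLE h)) ∧
    (∀ g : (Fin m → Bool) → (Fin n → Bool),
      IsGraphHom (TwE m) (TwE n) g → DimPres g → Function.Surjective g →
        g = fun x => x ∘ Fin.castLE h) := by
  refine ⟨⟨isGraphHom_comp_castLE h, dimPres_comp_castLE h,
    (Fin.castLE_injective h).surjective_comp_right⟩, fun g hg hd hs => funext fun x => ?_⟩
  refine eq_of_forall_edgeOut_iff fun j => ?_
  rw [edgeOut_comp_castLE, ← edgeOut_iff_of_semiconj hg (semiconj_flipAt_castLE h hg hd hs j)]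
end

section
/- For all natural numbers m and n, there is a bijection between the set of dimension-preserving graph morphisms from the twisted m-cube to the twisted n-cube and the set of functions f : Fin n → Option Bool such that the number of indices i with f i = none is at most m. -/
/-!
Put `twist x i = [x i] + #{j < i | x j = false}` in `ZMod 2`. Then `(x, flip_i x)` is an edge
iff `twist x i = 0`, and flipping coordinate `s` adds `[s ≤ i]` to `twist x i`.

A dimension-preserving morphism `g` either collapses all flips of an input coordinate `t` or sends
them all to flips of one output coordinate `j`; in the latter case, respecting edge directions
means `twist (g x) j = twist x t`. An output coordinate hit by no input flip is constant, because
the cube is connected by flips. So `g` has a profile `f : Fin n → Option Bool` (its constant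
coordinates with their values) with at most `m` free coordinates. Going up the coordinates, the
twist equations determine first the input driving a free coordinate and then its values, so `g` is
determined by its profile. Conversely every such profile is realised by the map whose `k`-th free
coordinate copies input `k`, corrected by the parity of the constants `false` placed since the
previous free coordinate.
-/

open Finset

namespace TwistedCube

variable {m n : ℕ}

def bit (b : Bool) : ZMod 2 := if b then 1 else 0

lemma bit_injective : Function.Injective bit := by
  intro a b; cases a <;> cases b <;> decide

@[simp] lemma bit_not (b : Bool) : bit (!b) = bit b + 1 := by cases b <;> decide

lemma bit_xor (a b : Bool) : bit (xor a b) = bit a + bit b := by cases a <;> cases b <;> decide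

lemma bit_of_ne {a b : Bool} (h : a ≠ b) : bit b = bit a + 1 := by
  cases a <;> cases b <;> first | decide | exact absurd rfl h

lemma iff_odd_iff_bit_eq (b : Bool) (c : ℕ) : (b = true ↔ Odd c) ↔ bit b = c := by
  rw [← ZMod.natCast_eq_one_iff_odd]
  generalize (c : ZMod 2) = z
  revert z
  cases b <;> decide

lemma Flips.symm {x y : Fin n → Bool} {i : Fin n} (h : Flips x y i) : Flips y x i :=
  ⟨h.1.symm, fun j hj => (h.2 j hj).symm⟩

lemma Flips.unique {x y : Fin n → Bool} {i j : Fin n} (hi : Flips x y i) (hj : Flips x y j) :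
    i = j := by
  by_contra hne
  exact hi.1 (hj.2 i hne)

lemma flips_update (x : Fin n → Bool) (i : Fin n) : Flips x (Function.update x i !(x i)) i :=
  ⟨by simp, fun j hj => by simp [Function.update_of_ne hj]⟩

lemma bit_of_flips {x y : Fin n → Bool} {i : Fin n} (h : Flips x y i) (j : Fin n) :
    bit (y j) = bit (x j) + if j = i then 1 else 0 := by
  by_cases hj : j = i
  · subst hj; simp [bit_of_ne h.1]
  · simp [h.2 j hj, hj]

def falsesBelow (x : Fin n → Bool) (a : ℕ) : Finset (Fin n) := {j | (j : ℕ) < a ∧ x j = false}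

lemma cast_card_falsesBelow (x : Fin n → Bool) (a : ℕ) :
    (#(falsesBelow x a) : ZMod 2) = ∑ j ∈ {j : Fin n | (j : ℕ) < a}, bit (!x j) := by
  rw [falsesBelow, ← filter_filter, natCast_card_filter]
  refine sum_congr rfl fun j _ => ?_
  cases x j <;> rfl

def twist (x : Fin n → Bool) (i : Fin n) : ZMod 2 := bit (x i) + #(falsesBelow x i)

lemma twE_iff {x y : Fin n → Bool} : TwE n x y ↔ x = y ∨ ∃ i, Flips x y i ∧ twist x i = 0 := by
  refine or_congr_right (exists_congr fun i => ?_)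
  rw [Flips, twist, CharTwo.add_eq_zero, ← iff_odd_iff_bit_eq, Bool.eq_not]
  exact ⟨fun ⟨hoff, hi, hodd⟩ => ⟨⟨hi.symm, hoff⟩, hodd⟩,
    fun ⟨⟨hi, hoff⟩, hodd⟩ => ⟨hoff, Ne.symm hi, hodd⟩⟩

lemma twist_of_flips {x y : Fin n → Bool} {s : Fin n} (h : Flips x y s) (t : Fin n) :
    twist y t = twist x t + if s ≤ t then 1 else 0 := by
  simp only [twist, cast_card_falsesBelow, bit_not, bit_of_flips h, sum_add_distrib,
    sum_ite_eq', mem_filter, mem_univ, true_and, Fin.val_fin_lt]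
  rcases lt_trichotomy s t with hst | rfl | hts
  · simp [hst.ne', hst.le, hst]; ring
  · simp; ring
  · simp [hts.ne, hts.not_gt, hts.not_ge]

lemma le_of_forall_twist_eq {s t : Fin n} (h : ∀ x, twist x s = twist x t) : s ≤ t := by
  let x : Fin n → Bool := fun _ => false
  have hs := twist_of_flips (flips_update x s) s
  have ht := twist_of_flips (flips_update x s) t
  rw [h, h x, if_pos le_rfl] at hs
  by_contra hst
  rw [if_neg hst, hs] at ht
  grind

lemma twist_add_twist_of_eq_below {y y' : Fin n → Bool} {i : Fin n} (h : ∀ j < i, y j = y' j) :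
    twist y i + twist y' i = bit (y i) + bit (y' i) := by
  have : falsesBelow y i = falsesBelow y' i :=
    filter_congr fun j _ => and_congr_right fun hj => by rw [h j hj]
  rw [twist, twist, this]
  grind

lemma card_filter_lt_succ (P : Fin n → Prop) [DecidablePred P] (a : ℕ) :
    #{j : Fin n | (j : ℕ) < a + 1 ∧ P j} =
      #{j : Fin n | (j : ℕ) < a ∧ P j} + if h : a < n then (if P ⟨a, h⟩ then 1 else 0) else 0 := by
  have hsplit : ∀ j : Fin n, (j : ℕ) < a + 1 ↔ (j : ℕ) < a ∨ (j : ℕ) = a := fun j => by omega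
  by_cases hP : ∃ h : a < n, P ⟨a, h⟩
  · obtain ⟨h, hp⟩ := hP
    rw [dif_pos h, if_pos hp, ← card_insert_of_notMem (a := (⟨a, h⟩ : Fin n)) (by simp)]
    congr 1
    ext j
    simp only [mem_filter, mem_univ, true_and, mem_insert, hsplit, Fin.ext_iff]
    constructor
    · rintro ⟨hj | hj, hpj⟩
      · exact Or.inr ⟨hj, hpj⟩
      · exact Or.inl hj
    · rintro (hj | ⟨hj, hpj⟩)
      · exact ⟨Or.inr hj, by rwa [show j = ⟨a, h⟩ from Fin.ext hj]⟩
      · exact ⟨Or.inl hj, hpj⟩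
  · rw [dite_eq_right_iff.mpr fun h => if_neg fun hp => hP ⟨h, hp⟩, add_zero]
    refine congrArg card (filter_congr fun j _ => ?_)
    rw [hsplit]
    refine ⟨fun ⟨hj, hpj⟩ => ⟨hj.resolve_right fun hja => hP ?_, hpj⟩,
      fun ⟨hj, hpj⟩ => ⟨Or.inl hj, hpj⟩⟩
    exact ⟨hja ▸ j.isLt, by rwa [show (⟨a, _⟩ : Fin n) = j from Fin.ext hja.symm]⟩

/-- Out of range the value is `true`, so that `cast_card_falsesBelow_succ` holds for every `k`. -/
def valAt (x : Fin m → Bool) (k : ℕ) : Bool := if h : k < m then x ⟨k, h⟩ else true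

lemma cast_card_falsesBelow_succ (x : Fin m → Bool) (k : ℕ) :
    (#(falsesBelow x (k + 1)) : ZMod 2) = #(falsesBelow x k) + bit (!valAt x k) := by
  rw [falsesBelow, falsesBelow, card_filter_lt_succ, valAt]
  split_ifs with h hx <;> simp_all [bit]

def noneBelow (f : Fin n → Option Bool) (a : ℕ) : ℕ := #{j : Fin n | (j : ℕ) < a ∧ f j = none}

lemma noneBelow_succ (f : Fin n → Option Bool) (a : ℕ) :
    noneBelow f (a + 1) =
      noneBelow f a + if h : a < n then (if f ⟨a, h⟩ = none then 1 else 0) else 0 :=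
  card_filter_lt_succ _ a

/-- Parity of the number of `some false` entries of `f` since its last `none` before `a`. -/
def gapParity (f : Fin n → Option Bool) : ℕ → Bool
  | 0 => false
  | a + 1 =>
    if h : a < n then
      match f ⟨a, h⟩ with
      | none => false
      | some b => xor (gapParity f a) !b
    else gapParity f a

def phi (m : ℕ) (f : Fin n → Option Bool) (x : Fin m → Bool) (i : Fin n) : Bool :=
  (f i).getD (xor (valAt x (noneBelow f i)) (gapParity f i))

lemma cast_card_falsesBelow_phi (f : Fin n → Option Bool) (x : Fin m → Bool) (a : ℕ) :
    (#(falsesBelow (phi m f x) a) : ZMod 2) =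
      #(falsesBelow x (noneBelow f a)) + bit (gapParity f a) := by
  induction a with
  | zero => simp [falsesBelow, noneBelow, gapParity, bit]
  | succ a ih =>
    rw [cast_card_falsesBelow_succ, ih, noneBelow_succ]
    by_cases h : a < n
    · have hval : valAt (phi m f x) a = phi m f x ⟨a, h⟩ := dif_pos h
      cases hfa : f ⟨a, h⟩ with
      | none =>
        simp only [hval, phi, hfa, gapParity, h, dif_pos, if_true, Option.getD_none]
        rw [cast_card_falsesBelow_succ, bit_not, bit_not, bit_xor, show bit false = 0 from rfl]
        grind
      | some b =>
        simp only [hval, phi, hfa, gapParity, h, dif_pos, Option.getD_some, reduceCtorEq,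
          if_false, add_zero, bit_xor, bit_not]
        ring
    · simp [valAt, gapParity, h, bit]

lemma twist_phi {f : Fin n → Option Bool} {i : Fin n} (hi : f i = none) (hk : noneBelow f i < m)
    (x : Fin m → Bool) : twist (phi m f x) i = twist x ⟨noneBelow f i, hk⟩ := by
  rw [twist, twist, cast_card_falsesBelow_phi]
  simp only [phi, hi, Option.getD_none, bit_xor, valAt, dif_pos hk]
  grind

section Phi

variable {f : Fin n → Option Bool}

lemma noneBelow_lt_noneBelow {i j : Fin n} (hij : i < j) (hi : f i = none) :
    noneBelow f i < noneBelow f j := by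
  refine card_lt_card ((ssubset_iff_of_subset fun k hk => ?_).mpr ⟨i, ?_, ?_⟩)
  · simp only [mem_filter, mem_univ, true_and] at hk ⊢
    exact ⟨hk.1.trans hij, hk.2⟩
  · simpa using ⟨hij, hi⟩
  · simp

lemma eq_of_noneBelow_eq {i j : Fin n} (hi : f i = none) (hj : f j = none)
    (h : noneBelow f i = noneBelow f j) : i = j := by
  rcases lt_trichotomy i j with hij | hij | hij
  · exact absurd h (noneBelow_lt_noneBelow hij hi).ne
  · exact hij
  · exact absurd h (noneBelow_lt_noneBelow hij hj).ne'

lemma noneBelow_lt_card {i : Fin n} (hi : f i = none) : noneBelow f i < #{j | f j = none} := by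
  refine card_lt_card ((ssubset_iff_of_subset fun k hk => ?_).mpr ⟨i, ?_, ?_⟩)
  · simp only [mem_filter, mem_univ, true_and] at hk ⊢
    exact hk.2
  · simpa using hi
  · simp

lemma phi_of_some {i : Fin n} {b : Bool} (h : f i = some b) (x : Fin m → Bool) :
    phi m f x i = b := by
  simp [phi, h]

lemma phi_apply_eq_of_flips {x y : Fin m → Bool} {t : Fin m} (hxy : Flips x y t) {i : Fin n}
    (hi : f i = none → noneBelow f i ≠ t) : phi m f x i = phi m f y i := by
  cases hfi : f i with
  | some b => rw [phi_of_some hfi, phi_of_some hfi]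
  | none =>
    have hval : valAt x (noneBelow f i) = valAt y (noneBelow f i) := by
      unfold valAt
      split_ifs with hk
      · exact hxy.2 _ fun h => hi hfi (congrArg Fin.val h)
      · rfl
    simp [phi, hfi, hval]

lemma phi_flips {x y : Fin m → Bool} {t : Fin m} (hxy : Flips x y t) {i : Fin n}
    (hi : f i = none) (hit : noneBelow f i = t) : Flips (phi m f x) (phi m f y) i := by
  refine ⟨?_, fun j hj => phi_apply_eq_of_flips hxy fun hfj hjt =>
    hj (eq_of_noneBelow_eq hfj hi (hjt.trans hit.symm))⟩
  have hval : ∀ z : Fin m → Bool, valAt z (noneBelow f i) = z t := fun z => by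
    simp [valAt, hit]
  simpa [phi, hi, hval] using hxy.1

lemma phi_eq_of_flips {x y : Fin m → Bool} {t : Fin m} (hxy : Flips x y t)
    (ht : ∀ i, f i = none → noneBelow f i ≠ t) : phi m f x = phi m f y :=
  funext fun _ => phi_apply_eq_of_flips hxy (ht _)

lemma phi_isGraphHom (f : Fin n → Option Bool) : IsGraphHom (TwE m) (TwE n) (phi m f) := by
  intro x y
  simp only [twE_iff]
  rintro (rfl | ⟨t, hxy, ht⟩)
  · exact Or.inl rfl
  by_cases hex : ∃ i, f i = none ∧ noneBelow f i = t
  · obtain ⟨i, hi, hit⟩ := hex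
    refine Or.inr ⟨i, phi_flips hxy hi hit, ?_⟩
    rw [twist_phi hi (hit ▸ t.isLt), ← ht]
    congr
  · push Not at hex
    exact Or.inl (phi_eq_of_flips hxy hex)

lemma phi_dimPres (f : Fin n → Option Bool) : DimPres (phi m f) := by
  intro x₁ y₁ x₂ y₂ t h₁ h₂
  by_cases hex : ∃ i, f i = none ∧ noneBelow f i = t
  · obtain ⟨i, hi, hit⟩ := hex
    exact Or.inr ⟨i, phi_flips h₁ hi hit, phi_flips h₂ hi hit⟩
  · push Not at hex
    exact Or.inl ⟨phi_eq_of_flips h₁ hex, phi_eq_of_flips h₂ hex⟩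

end Phi

lemma eq_of_forall_flips {α : Type*} (φ : (Fin m → Bool) → α)
    (h : ∀ x y t, Flips x y t → φ x = φ y) (x y : Fin m → Bool) : φ x = φ y := by
  suffices ∀ s : Finset (Fin m), ∀ x y : Fin m → Bool, (∀ i ∉ s, x i = y i) → φ x = φ y from
    this univ x y (by simp)
  intro s
  induction s using Finset.induction_on with
  | empty => exact fun x y hxy => congrArg φ (funext fun i => hxy i (notMem_empty i))
  | insert a s _ ih =>
    intro x y hxy
    have hstep : φ x = φ (Function.update x a (y a)) := by
      by_cases hxa : x a = y a
      · rw [← hxa, Function.update_eq_self]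
      · exact h _ _ a ⟨by simpa using hxa, fun j hj => by simp [Function.update_of_ne hj]⟩
    refine hstep.trans (ih _ _ fun i hi => ?_)
    by_cases hia : i = a
    · simp [hia]
    · simpa [Function.update_of_ne hia] using hxy i (by simp [hia, hi])

section Morphism

variable {g g' : (Fin m → Bool) → (Fin n → Bool)}

def MapsFlip (g : (Fin m → Bool) → (Fin n → Bool)) (t : Fin m) (j : Fin n) : Prop :=
  ∀ x y, Flips x y t → Flips (g x) (g y) j

lemma DimPres.collapses_or_mapsFlip (hd : DimPres g) (t : Fin m) :
    (∀ x y, Flips x y t → g x = g y) ∨ ∃ j, MapsFlip g t j := by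
  by_contra! ⟨⟨x₀, y₀, h₀, hne⟩, hno⟩
  obtain ⟨j, hj⟩ : ∃ j, Flips (g x₀) (g y₀) j := by
    rcases hd x₀ y₀ x₀ y₀ t h₀ h₀ with h | ⟨j, hj, -⟩
    exacts [absurd h.1 hne, ⟨j, hj⟩]
  refine hno j fun x y hxy => ?_
  rcases hd x₀ y₀ x y t h₀ hxy with h | ⟨j', hj', hxyj'⟩
  exacts [absurd h.1 hne, Flips.unique hj' hj ▸ hxyj']

lemma twist_apply_eq_zero (hg : IsGraphHom (TwE m) (TwE n) g) {x y : Fin m → Bool} {t : Fin m}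
    {j : Fin n} (hxy : Flips x y t) (hx : twist x t = 0) (hgxy : Flips (g x) (g y) j) :
    twist (g x) j = 0 := by
  rcases twE_iff.mp (hg x y (twE_iff.mpr (Or.inr ⟨t, hxy, hx⟩))) with h | ⟨i, hi, hgi⟩
  · exact absurd (congrFun h j) hgxy.1
  · rwa [Flips.unique hi hgxy] at hgi

lemma twist_apply_of_mapsFlip (hg : IsGraphHom (TwE m) (TwE n) g) {t : Fin m} {j : Fin n}
    (h : MapsFlip g t j) (x : Fin m → Bool) : twist (g x) j = twist x t := by
  set y := Function.update x t !(x t)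
  have hxy : Flips x y t := flips_update x t
  rcases (by decide : ∀ z : ZMod 2, z = 0 ∨ z = 1) (twist x t) with hx | hx
  · rw [hx, twist_apply_eq_zero hg hxy hx (h x y hxy)]
  · have hy : twist y t = 0 := by rw [twist_of_flips hxy, hx, if_pos le_rfl]; decide
    have hgy := twist_apply_eq_zero hg (Flips.symm hxy) hy (h y x (Flips.symm hxy))
    rw [twist_of_flips (h x y hxy), if_pos le_rfl] at hgy
    grind

lemma MapsFlip.source_unique (hg : IsGraphHom (TwE m) (TwE n) g) {s t : Fin m} {j : Fin n}
    (hs : MapsFlip g s j) (ht : MapsFlip g t j) : s = t := by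
  have h : ∀ x, twist x s = twist x t := fun x => by
    rw [← twist_apply_of_mapsFlip hg hs, twist_apply_of_mapsFlip hg ht]
  exact le_antisymm (le_of_forall_twist_eq h) (le_of_forall_twist_eq fun x => (h x).symm)

lemma apply_eq_of_flips_of_mapsFlip (hg : IsGraphHom (TwE m) (TwE n) g) (hd : DimPres g)
    {s t : Fin m} {j : Fin n} (hj : MapsFlip g t j) (hst : s ≠ t) {x y : Fin m → Bool}
    (hxy : Flips x y s) : g x j = g y j := by
  rcases DimPres.collapses_or_mapsFlip hd s with hc | ⟨j', hj'⟩
  · exact congrFun (hc x y hxy) j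
  · exact (hj' x y hxy).2 j fun h => hst ((h ▸ hj').source_unique hg hj)

open Classical in
noncomputable def profile (g : (Fin m → Bool) → (Fin n → Bool)) (j : Fin n) : Option Bool :=
  if ∀ x y, g x j = g y j then some (g (fun _ => false) j) else none

lemma profile_eq_none_iff {j : Fin n} : profile g j = none ↔ ¬ ∀ x y, g x j = g y j := by
  unfold profile
  split_ifs with h
  · simpa using h
  · simpa using h

lemma apply_eq_of_profile_eq_some {j : Fin n} {b : Bool} (h : profile g j = some b)
    (x : Fin m → Bool) : g x j = b := by
  unfold profile at h
  split_ifs at h with hc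
  exact (hc x _).trans (Option.some_inj.mp h)

lemma exists_mapsFlip_of_profile_eq_none (hd : DimPres g) {j : Fin n} (h : profile g j = none) :
    ∃ t, MapsFlip g t j := by
  by_contra! hno
  refine profile_eq_none_iff.mp h (eq_of_forall_flips (g · j) fun x y t hxy => ?_)
  rcases DimPres.collapses_or_mapsFlip hd t with hc | ⟨j', hj'⟩
  · exact congrFun (hc x y hxy) j
  · exact (hj' x y hxy).2 j fun h => hno t (h ▸ hj')

lemma card_profile_eq_none_le (hd : DimPres g) : #{j | profile g j = none} ≤ m := by
  calc #{j | profile g j = none}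
      ≤ #(univ : Finset (Fin m)) := by
        refine card_le_card_of_forall_subsingleton (fun j t => MapsFlip g t j) (fun j hj => ?_)
          fun t _ j₁ hj₁ j₂ hj₂ => ?_
        · obtain ⟨t, ht⟩ := exists_mapsFlip_of_profile_eq_none hd (by simpa using hj)
          exact ⟨t, mem_univ t, ht⟩
        · have hx := flips_update (fun _ => false) t
          exact Flips.unique (hj₁.2 _ _ hx) (hj₂.2 _ _ hx)
    _ = m := by simp

/-- Were `t < t'`, flipping `t` would change `g x j` but not `g' x j`, although it changes both
`twist x t` and `twist x t'`. -/
lemma source_le_of_eq_below (hg : IsGraphHom (TwE m) (TwE n) g)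
    (hg' : IsGraphHom (TwE m) (TwE n) g') (hd' : DimPres g') {j : Fin n}
    (hagree : ∀ x, ∀ i < j, g x i = g' x i) {t t' : Fin m} (ht : MapsFlip g t j) (ht' : MapsFlip g' t' j) : t' ≤ t := by
  by_contra! hlt
  let x : Fin m → Bool := fun _ => false
  let y := Function.update x t !(x t)
  have hxy : Flips x y t := flips_update x t
  have ex := twist_add_twist_of_eq_below (hagree x)
  have ey := twist_add_twist_of_eq_below (hagree y)
  have hg'xy : g' x j = g' y j := apply_eq_of_flips_of_mapsFlip hg' hd' ht' hlt.ne hxy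
  rw [twist_apply_of_mapsFlip hg ht, twist_apply_of_mapsFlip hg' ht'] at ex ey
  rw [twist_of_flips hxy, twist_of_flips hxy, if_pos le_rfl, if_pos hlt.le,
    bit_of_ne (ht x y hxy).1, ← hg'xy] at ey
  grind

lemma eq_of_profile_eq (hg : IsGraphHom (TwE m) (TwE n) g) (hd : DimPres g)
    (hg' : IsGraphHom (TwE m) (TwE n) g') (hd' : DimPres g') (h : profile g = profile g') :
    g = g' := by
  suffices ∀ j x, g x j = g' x j from funext fun x => funext fun j => this j x
  intro j
  induction j using WellFoundedLT.induction with
  | _ j ih =>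
    intro x
    cases hj : profile g j with
    | some b =>
      have hj' : profile g' j = some b := h ▸ hj
      rw [apply_eq_of_profile_eq_some hj, apply_eq_of_profile_eq_some hj']
    | none =>
      obtain ⟨t, ht⟩ := exists_mapsFlip_of_profile_eq_none hd hj
      obtain ⟨t', ht'⟩ := exists_mapsFlip_of_profile_eq_none hd' (h ▸ hj)
      have hagree : ∀ x, ∀ i < j, g x i = g' x i := fun x i hi => ih i hi x
      obtain rfl : t = t' := le_antisymm
        (source_le_of_eq_below hg' hg hd (fun x i hi => (hagree x i hi).symm) ht' ht)
        (source_le_of_eq_below hg hg' hd' hagree ht ht')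
      have hx := twist_add_twist_of_eq_below (hagree x)
      rw [twist_apply_of_mapsFlip hg ht, twist_apply_of_mapsFlip hg' ht'] at hx
      exact bit_injective (by grind)

end Morphism

lemma profile_phi {f : Fin n → Option Bool} (hf : #{i | f i = none} ≤ m) :
    profile (phi m f) = f := by
  funext i
  cases hfi : f i with
  | none =>
    refine profile_eq_none_iff.mpr fun hconst => ?_
    let t : Fin m := ⟨noneBelow f i, (noneBelow_lt_card hfi).trans_le hf⟩
    have hxy := flips_update (fun _ => false) t
    exact (phi_flips hxy hfi rfl).1 (hconst _ _)
  | some b =>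
    have hconst : ∀ x y, phi m f x i = phi m f y i := fun x y => by
      rw [phi_of_some hfi, phi_of_some hfi]
    rw [profile, if_pos hconst, phi_of_some hfi]

end TwistedCube

theorem stmt13 (m n : ℕ) :
    Nonempty
      ({g : (Fin m → Bool) → (Fin n → Bool) //
          IsGraphHom (TwE m) (TwE n) g ∧ DimPres g} ≃
       {f : Fin n → Option Bool //
          (Finset.univ.filter (fun i => f i = none)).card ≤ m}) :=
  open TwistedCube in
  ⟨{ toFun := fun g => ⟨profile g.1, card_profile_eq_none_le g.2.2⟩
     invFun := fun f => ⟨phi m f.1, phi_isGraphHom f.1, phi_dimPres f.1⟩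
     left_inv := fun g => Subtype.ext <| eq_of_profile_eq (phi_isGraphHom _) (phi_dimPres _)
       g.2.1 g.2.2 (profile_phi (card_profile_eq_none_le g.2.2))
     right_inv := fun f => Subtype.ext (profile_phi f.2) }⟩
end
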